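/- Let R be a 2-torsion free σ-prime ring, U a square closed σ-Lie ideal of R, and d a derivation of R. If d([x,y]) = 0 for all x, y ∈ U, then d = 0 or U ⊆ Z(R). -/

import Mathlib

/-!
Put `τ = σ ∘ d ∘ σ`, again a derivation killing `[U, U]`. Since `2yw ∈ U` for `y, w ∈ U`,
expanding `d [x, 2yp] = 0` gives `[x, y] U d(p) = 0` whenever `x, p ∈ U` commute, and likewise
for `τ`. If `[U, U] ≠ 0`, then `2r[a, a']s ∈ U` makes `cUb = cUσ(b) = 0` imply `c = 0` or `b = 0`;
as `τ(p) = ±σ(d p)` when `σ(p) = ±p`, a nonzero `d(p)` would force first `[p, U] = 0` and then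
`[U, U] = 0`. So `d` vanishes on the symmetric and skew parts of `U`, hence on `U`, and then
`[U, U] R d(t) = [U, U] R σ(d t) = 0`. If instead `[U, U] = 0`, then `[v, [v, r]] = 0` for
symmetric or skew `v ∈ U`, which in a σ-prime ring forces `[v, R] = 0`.
-/

def IsStarPrime (R : Type*) [Ring R] [Star R] : Prop :=
  ∀ a b : R, (∀ r, a * r * b = 0) → (∀ r, a * r * star b = 0) → a = 0 ∨ b = 0

theorem AddMonoidHom.map_eq_zero_of_forall_star_eq_or_eq_neg {A M : Type*} [AddCommGroup A]
    [StarAddMonoid A] [AddCommGroup M] (hM : ∀ x : M, x + x = 0 → x = 0) {U : AddSubgroup A}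
    (hstar : ∀ u ∈ U, star u ∈ U) (f : A →+ M)
    (h : ∀ p ∈ U, (star p = p ∨ star p = -p) → f p = 0) {u : A} (hu : u ∈ U) : f u = 0 := by
  have hsym := h _ (add_mem hu (hstar u hu)) (.inl (by rw [star_add, star_star, add_comm]))
  have hskew := h _ (sub_mem hu (hstar u hu)) (.inr (by rw [star_sub, star_star, neg_sub]))
  refine hM _ ?_
  rw [← map_add, show u + u = u + star u + (u - star u) by abel, map_add, hsym, hskew, add_zero]

section Ring

variable {R : Type*} [Ring R]

attribute [local instance] LieRing.ofAssociativeRing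

theorem Ring.lie_mul (x y z : R) : ⁅x, y * z⁆ = ⁅x, y⁆ * z + y * ⁅x, z⁆ := by
  simp only [Ring.lie_def]; noncomm_ring

variable {U : AddSubgroup R}

theorem add_self_mul_mem (hLie : ∀ u ∈ U, ∀ r : R, ⁅u, r⁆ ∈ U) (hsq : ∀ u ∈ U, u * u ∈ U)
    {u v : R} (hu : u ∈ U) (hv : v ∈ U) : u * v + u * v ∈ U := by
  have hsym := sub_mem (sub_mem (hsq _ (add_mem hu hv)) (hsq u hu)) (hsq v hv)
  convert add_mem hsym (hLie u hu v) using 1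
  simp only [Ring.lie_def]; noncomm_ring

theorem add_self_mul_lie_mem (hLie : ∀ u ∈ U, ∀ r : R, ⁅u, r⁆ ∈ U) (hsq : ∀ u ∈ U, u * u ∈ U)
    {a a' : R} (ha : a ∈ U) (ha' : a' ∈ U) (r : R) : r * ⁅a, a'⁆ + r * ⁅a, a'⁆ ∈ U := by
  have hLie₂ := hLie a ha (r * a')
  convert sub_mem (add_mem hLie₂ hLie₂) (add_self_mul_mem hLie hsq (hLie a ha r) ha') using 1
  rw [Ring.lie_mul]; abel

theorem add_self_mul_lie_mul_mem (hLie : ∀ u ∈ U, ∀ r : R, ⁅u, r⁆ ∈ U)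
    (hsq : ∀ u ∈ U, u * u ∈ U) {a a' : R} (ha : a ∈ U) (ha' : a' ∈ U) (r s : R) :
    r * ⁅a, a'⁆ * s + r * ⁅a, a'⁆ * s ∈ U := by
  convert add_mem (hLie _ (add_self_mul_lie_mem hLie hsq ha ha' r) s)
    (add_self_mul_lie_mem hLie hsq ha ha' (s * r)) using 1
  simp only [Ring.lie_def]; noncomm_ring

/-- With `p = x` this reads `[x, y] U d(x) = 0`. -/
theorem lie_mul_mul_map_eq_zero (htor : ∀ x : R, x + x = 0 → x = 0)
    (hLie : ∀ u ∈ U, ∀ r : R, ⁅u, r⁆ ∈ U) (hsq : ∀ u ∈ U, u * u ∈ U) (δ : R →+ R)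
    (hδ : ∀ x y, δ (x * y) = δ x * y + x * δ y) (hδU : ∀ x ∈ U, ∀ y ∈ U, δ ⁅x, y⁆ = 0)
    {x y w p : R} (hx : x ∈ U) (hy : y ∈ U) (hw : w ∈ U) (hp : p ∈ U) (hxp : ⁅x, p⁆ = 0) :
    ⁅x, y⁆ * w * δ p = 0 := by
  have hmul : ∀ y ∈ U, ⁅x, y⁆ * δ p = 0 := by
    intro y hy
    have h := hδU x hx _ (add_self_mul_mem hLie hsq hy hp)
    rw [lie_add, map_add] at h
    simpa only [Ring.lie_mul, hxp, mul_zero, add_zero, hδ, hδU x hx y hy, zero_mul, zero_add]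
      using htor _ h
  have h := hmul _ (add_self_mul_mem hLie hsq hy hw)
  rw [lie_add, add_mul] at h
  simpa only [Ring.lie_mul, add_mul, mul_assoc, hmul w hw, mul_zero, add_zero] using htor _ h

theorem lie_mul_mul_map_eq_zero_of_map_eq_zero (hLie : ∀ u ∈ U, ∀ r : R, ⁅u, r⁆ ∈ U)
    (δ : R →+ R) (hδ : ∀ x y, δ (x * y) = δ x * y + x * δ y) (hδU : ∀ u ∈ U, δ u = 0)
    {u w : R} (hu : u ∈ U) (hw : w ∈ U) (s t : R) : ⁅u, w⁆ * s * δ t = 0 := by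
  have hlie : ∀ r, ⁅u, δ r⁆ = 0 := fun r => by
    simpa only [Ring.lie_def, map_sub, hδ, hδU u hu, zero_mul, mul_zero, zero_add, add_zero]
      using hδU _ (hLie u hu r)
  have hmul : ∀ s, ⁅u, w⁆ * δ s = 0 := fun s => by
    have h := hlie (w * s)
    rwa [hδ, hδU w hw, zero_mul, zero_add, Ring.lie_mul, hlie, mul_zero, add_zero] at h
  simpa only [hδ, mul_add, ← mul_assoc, hmul, zero_mul, zero_add] using hmul (s * t)

end Ring

section StarRing

variable {R : Type*} [Ring R] [StarRing R]

attribute [local instance] LieRing.ofAssociativeRing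

theorem star_lie (x y : R) : star ⁅x, y⁆ = ⁅star y, star x⁆ := by
  simp only [Ring.lie_def, star_sub, star_mul]

def AddMonoidHom.starConj (d : R →+ R) : R →+ R :=
  AddMonoidHom.mk' (fun x => star (d (star x))) fun x y => by simp only [star_add, map_add]

@[simp]
theorem AddMonoidHom.starConj_apply (d : R →+ R) (x : R) : d.starConj x = star (d (star x)) :=
  rfl

theorem AddMonoidHom.starConj_mul {d : R →+ R} (hd : ∀ x y, d (x * y) = d x * y + x * d y)
    (x y : R) : d.starConj (x * y) = d.starConj x * y + x * d.starConj y := by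
  simp only [starConj_apply, star_mul, hd, star_add, star_star, add_comm]

theorem IsStarPrime.lie_eq_zero_of_lie_lie_eq_zero (hprime : IsStarPrime R)
    (htor : ∀ x : R, x + x = 0 → x = 0) {v : R} (hv : star v = v ∨ star v = -v)
    (h : ∀ r : R, ⁅v, ⁅v, r⁆⁆ = 0) (r : R) : ⁅v, r⁆ = 0 := by
  have hmul : ∀ r s : R, ⁅v, r⁆ * ⁅v, s⁆ = 0 := fun r s => htor _ <| by
    have hexp : ⁅v, ⁅v, r * s⁆⁆ =
        ⁅v, ⁅v, r⁆⁆ * s + (⁅v, r⁆ * ⁅v, s⁆ + ⁅v, r⁆ * ⁅v, s⁆) + r * ⁅v, ⁅v, s⁆⁆ := by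
      simp only [Ring.lie_def]; noncomm_ring
    rwa [h, h, h, zero_mul, mul_zero, zero_add, add_zero, eq_comm] at hexp
  have hsandwich : ∀ r s t : R, ⁅v, r⁆ * s * ⁅v, t⁆ = 0 := fun r s t => by
    have h := hmul r (s * t)
    rwa [Ring.lie_mul, mul_add, ← mul_assoc, hmul, zero_mul, zero_add, ← mul_assoc] at h
  refine (hprime _ _ (fun s => hsandwich r s r) fun s => ?_).elim id id
  rcases hv with hv | hv
  · rw [star_lie, hv, ← lie_skew (star r) v, mul_neg, hsandwich, neg_zero]
  · rw [star_lie, hv, lie_neg, lie_skew v (star r), hsandwich]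

variable {U : AddSubgroup R}

theorem IsStarPrime.lie_eq_zero_of_forall_lie_eq_zero (hprime : IsStarPrime R)
    (htor : ∀ x : R, x + x = 0 → x = 0) (hLie : ∀ u ∈ U, ∀ r : R, ⁅u, r⁆ ∈ U)
    (hstar : ∀ u ∈ U, star u ∈ U) (hcomm : ∀ x ∈ U, ∀ y ∈ U, ⁅x, y⁆ = 0) {u : R} (hu : u ∈ U)
    (r : R) : ⁅u, r⁆ = 0 :=
  AddMonoidHom.map_eq_zero_of_forall_star_eq_or_eq_neg htor hstar
    (AddMonoidHom.mk' (fun x : R => ⁅x, r⁆) (add_lie · · r))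
    (fun p hp hsym => hprime.lie_eq_zero_of_lie_lie_eq_zero htor hsym
      (fun s => hcomm p hp _ (hLie p hp s)) r) hu

theorem IsStarPrime.eq_zero_or_eq_zero_of_forall_mem (hprime : IsStarPrime R)
    (htor : ∀ x : R, x + x = 0 → x = 0) (hLie : ∀ u ∈ U, ∀ r : R, ⁅u, r⁆ ∈ U)
    (hstar : ∀ u ∈ U, star u ∈ U) (hsq : ∀ u ∈ U, u * u ∈ U)
    (hnc : ∃ x ∈ U, ∃ y ∈ U, ⁅x, y⁆ ≠ 0) {c b : R} (hb : ∀ u ∈ U, c * u * b = 0)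
    (hb' : ∀ u ∈ U, c * u * star b = 0) : c = 0 ∨ b = 0 := by
  refine or_iff_not_imp_right.2 fun hb0 => ?_
  have hkill : ∀ x ∈ U, ∀ y ∈ U, ∀ r, c * r * ⁅x, y⁆ = 0 := by
    intro x hx y hy r
    have hmem := add_self_mul_lie_mul_mem hLie hsq hx hy r
    refine (hprime _ b (fun s => htor _ ?_) (fun s => htor _ ?_)).resolve_right hb0
    · simpa only [mul_add, add_mul, mul_assoc] using hb _ (hmem s)
    · simpa only [mul_add, add_mul, mul_assoc] using hb' _ (hmem s)
  obtain ⟨x, hx, y, hy, hxy⟩ := hnc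
  refine (hprime c _ (hkill x hx y hy) fun r => ?_).resolve_right hxy
  rw [star_lie]
  exact hkill _ (hstar y hy) _ (hstar x hx) r

theorem IsStarPrime.map_eq_zero_of_mem (hprime : IsStarPrime R)
    (htor : ∀ x : R, x + x = 0 → x = 0) (hLie : ∀ u ∈ U, ∀ r : R, ⁅u, r⁆ ∈ U)
    (hstar : ∀ u ∈ U, star u ∈ U) (hsq : ∀ u ∈ U, u * u ∈ U)
    (hnc : ∃ x ∈ U, ∃ y ∈ U, ⁅x, y⁆ ≠ 0) (d : R →+ R)
    (hd : ∀ x y, d (x * y) = d x * y + x * d y) (hdU : ∀ x ∈ U, ∀ y ∈ U, d ⁅x, y⁆ = 0)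
    {u : R} (hu : u ∈ U) : d u = 0 := by
  have hτU : ∀ x ∈ U, ∀ y ∈ U, d.starConj ⁅x, y⁆ = 0 := fun x hx y hy => by
    rw [AddMonoidHom.starConj_apply, star_lie, hdU _ (hstar y hy) _ (hstar x hx), star_zero]
  have hcomm : ∀ p ∈ U, (star p = p ∨ star p = -p) → d p ≠ 0 →
      ∀ x ∈ U, ⁅x, p⁆ = 0 → ∀ y ∈ U, ⁅x, y⁆ = 0 := by
    intro p hp hsym hdp x hx hxp y hy
    refine (hprime.eq_zero_or_eq_zero_of_forall_mem htor hLie hstar hsq hnc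
      (fun w hw => lie_mul_mul_map_eq_zero htor hLie hsq d hd hdU hx hy hw hp hxp)
      fun w hw => ?_).resolve_right hdp
    have h := lie_mul_mul_map_eq_zero htor hLie hsq d.starConj (AddMonoidHom.starConj_mul hd)
      hτU hx hy hw hp hxp
    rcases hsym with hsym | hsym
    · rwa [AddMonoidHom.starConj_apply, hsym] at h
    · rwa [AddMonoidHom.starConj_apply, hsym, map_neg, star_neg, mul_neg, neg_eq_zero] at h
  refine AddMonoidHom.map_eq_zero_of_forall_star_eq_or_eq_neg htor hstar d
    (fun p hp hsym => by_contra fun hdp => ?_) hu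
  obtain ⟨x, hx, y, hy, hxy⟩ := hnc
  have hpU : ∀ y ∈ U, ⁅p, y⁆ = 0 := hcomm p hp hsym hdp p hp (lie_self p)
  exact hxy (hcomm p hp hsym hdp x hx (by rw [← lie_skew, hpU x hx, neg_zero]) y hy)

theorem IsStarPrime.map_eq_zero (hprime : IsStarPrime R)
    (htor : ∀ x : R, x + x = 0 → x = 0) (hLie : ∀ u ∈ U, ∀ r : R, ⁅u, r⁆ ∈ U)
    (hstar : ∀ u ∈ U, star u ∈ U) (hsq : ∀ u ∈ U, u * u ∈ U)
    (hnc : ∃ x ∈ U, ∃ y ∈ U, ⁅x, y⁆ ≠ 0) (d : R →+ R)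
    (hd : ∀ x y, d (x * y) = d x * y + x * d y) (hdU : ∀ x ∈ U, ∀ y ∈ U, d ⁅x, y⁆ = 0)
    (t : R) : d t = 0 := by
  have hd0 u (hu : u ∈ U) := hprime.map_eq_zero_of_mem htor hLie hstar hsq hnc d hd hdU hu
  obtain ⟨x, hx, y, hy, hxy⟩ := hnc
  refine (hprime _ (d t) (fun s => lie_mul_mul_map_eq_zero_of_map_eq_zero hLie d hd hd0 hx hy s t)
    fun s => ?_).resolve_left hxy
  simpa using lie_mul_mul_map_eq_zero_of_map_eq_zero hLie d.starConj
    (AddMonoidHom.starConj_mul hd) (fun u hu => by simp [hd0 _ (hstar u hu)]) hx hy s (star t)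

end StarRing

theorem stmt13 (R : Type*) [Ring R]
  (σ : R → R)
  (hσadd : ∀ x y : R, σ (x + y) = σ x + σ y)
  (hσmul : ∀ x y : R, σ (x * y) = σ y * σ x)
  (hσinv : ∀ x : R, σ (σ x) = x)
  (htor : ∀ x : R, x + x = 0 → x = 0)
  (hsp : ∀ a b : R, (∀ r : R, a * r * b = 0) → (∀ r : R, a * r * σ b = 0) → a = 0 ∨ b = 0)
  (U : AddSubgroup R)
  (hLie : ∀ u ∈ U, ∀ r : R, u * r - r * u ∈ U)
  (hσU : ∀ u ∈ U, σ u ∈ U)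
  (hsq : ∀ u ∈ U, u * u ∈ U)
  (d : R → R)
  (hdadd : ∀ x y : R, d (x + y) = d x + d y)
  (hdmul : ∀ x y : R, d (x * y) = d x * y + x * d y)
  (h : ∀ x ∈ U, ∀ y ∈ U, d (x * y - y * x) = 0) :
    (∀ x : R, d x = 0) ∨ (∀ u ∈ U, ∀ r : R, u * r = r * u) := by
  let _ : StarRing R :=
    { star := σ, star_involutive := hσinv, star_mul := hσmul, star_add := hσadd }
  have hprime : IsStarPrime R := hsp
  have hLie' : ∀ u ∈ U, ∀ r : R, ⁅u, r⁆ ∈ U := fun u hu r => by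
    rw [Ring.lie_def]; exact hLie u hu r
  by_cases hcomm : ∀ x ∈ U, ∀ y ∈ U, ⁅x, y⁆ = 0
  · refine .inr fun u hu r => sub_eq_zero.mp ?_
    rw [← Ring.lie_def]
    exact hprime.lie_eq_zero_of_forall_lie_eq_zero htor hLie' hσU hcomm hu r
  · push Not at hcomm
    refine .inl (hprime.map_eq_zero htor hLie' hσU hsq hcomm (AddMonoidHom.mk' d hdadd) hdmul
      fun x hx y hy => ?_)
    rw [Ring.lie_def]; exact h x hx y hy
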